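/- Let G be a finite connected graph with |V| ≥ 3 and let d be a derivation of the evolution algebra A(G) with matrix (d_{ij}). Then the matrix of d is skew-symmetric with zero diagonal, it vanishes on all entries (i,j) where i and j are not twins, and for every twin class T and i ∈ T one has Σ_{k∈T} d_{ki} = 0. In particular d is block-diagonal with skew-symmetric blocks indexed by the twin classes of size at least 3. -/

import Mathlib

/-!
Testing the rule for `e_i e_j = 0` against a neighbour `k` of `j` shows that `d_ij = 0` unless `k`
is also a neighbour of `i`, in which case `d_ij = -d_ji`. As no vertex is isolated, `d` is skew off
the diagonal and vanishes between non-twins. The rule for `e_i²` then says that along every edge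
`ij` the column sum of `d` over the twin class `T` of `j` is `2 d_ii`. Adding these column sums over
`T` and using skew-symmetry gives `|T| · 2 d_ii = Σ_{k ∈ T} d_kk = |T| d_jj`, so `d_jj = 2 d_ii`
along every edge. Used in both directions this gives `d_ii = 4 d_ii`, so the diagonal vanishes, and
with it every twin-class column sum.
-/

open Finset

theorem Finset.sum_sum_eq_sum_diag_of_antisymm {ι M : Type*} [DecidableEq ι] [AddCommGroup M]
    (s : Finset ι) (f : ι → ι → M) (hf : ∀ a b, a ≠ b → f a b = -f b a) :
    ∑ a ∈ s, ∑ b ∈ s, f a b = ∑ a ∈ s, f a a := by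
  have hoff : ∑ p ∈ s.offDiag, f p.1 p.2 = 0 :=
    sum_involution (fun p _ => p.swap)
      (fun p hp => by rw [hf p.1 p.2 (mem_offDiag.1 hp).2.2, Prod.fst_swap, Prod.snd_swap,
        neg_add_cancel])
      (fun p hp _ h => (mem_offDiag.1 hp).2.2 (congrArg Prod.fst h).symm)
      (fun p hp => by
        obtain ⟨h₁, h₂, hne⟩ := mem_offDiag.1 hp
        exact mem_offDiag.2 ⟨h₂, h₁, hne.symm⟩)
      (fun p _ => p.swap_swap)
  rw [← sum_product', ← diag_union_offDiag, sum_union (disjoint_diag_offDiag s), sum_diag, hoff,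
    add_zero]

namespace SimpleGraph

variable {V K : Type*} [Fintype V] (G : SimpleGraph V) [DecidableRel G.Adj]

structure IsEvolutionDerivation [Semiring K] (d : V → V → K) : Prop where
  cross : ∀ i j k : V, i ≠ j →
    (if G.Adj j k then (1:K) else 0) * d i j + (if G.Adj i k then (1:K) else 0) * d j i = 0
  square : ∀ i j : V, ∑ k, (if G.Adj i k then (1:K) else 0) * d k j =
    2 * (if G.Adj i j then (1:K) else 0) * d i i

section TwinClass

variable [DecidableEq V] {i j k : V}

def twinClass (j : V) : Finset V :=
  univ.filter fun m => G.neighborFinset m = G.neighborFinset j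

@[simp]
theorem mem_twinClass : k ∈ G.twinClass j ↔ G.neighborFinset k = G.neighborFinset j := by
  simp [twinClass]

theorem self_mem_twinClass (j : V) : j ∈ G.twinClass j := (G.mem_twinClass).2 rfl

theorem twinClass_eq_of_mem (hk : k ∈ G.twinClass j) : G.twinClass k = G.twinClass j := by
  ext m
  rw [mem_twinClass, mem_twinClass, (G.mem_twinClass).1 hk]

theorem adj_of_mem_twinClass (hk : k ∈ G.twinClass j) (hij : G.Adj i j) : G.Adj i k := by
  have : i ∈ G.neighborFinset k := by
    rw [(G.mem_twinClass).1 hk, mem_neighborFinset]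
    exact hij.symm
  exact ((G.mem_neighborFinset k i).1 this).symm

end TwinClass

namespace IsEvolutionDerivation

variable {G} {i j k : V} {d : V → V → K}

section Semiring

variable [Semiring K]

theorem eq_zero_of_adj_of_not_adj (hd : G.IsEvolutionDerivation d) (hjk : G.Adj j k)
    (hik : ¬G.Adj i k) : d i j = 0 := by
  have hij : i ≠ j := by
    rintro rfl
    exact hik hjk
  simpa [hjk, hik] using hd.cross i j k hij

theorem add_eq_zero_of_adj_of_adj (hd : G.IsEvolutionDerivation d) (hij : i ≠ j)
    (hjk : G.Adj j k) (hik : G.Adj i k) : d i j + d j i = 0 := by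
  simpa [hjk, hik] using hd.cross i j k hij

end Semiring

section Ring

variable [Ring K]

theorem eq_neg_of_ne (hd : G.IsEvolutionDerivation d) (hG : ∀ v, ∃ w, G.Adj v w)
    (hij : i ≠ j) : d i j = -d j i := by
  obtain ⟨k, hjk⟩ := hG j
  obtain ⟨l, hil⟩ := hG i
  by_cases hik : G.Adj i k
  · exact eq_neg_of_add_eq_zero_left (hd.add_eq_zero_of_adj_of_adj hij hjk hik)
  by_cases hjl : G.Adj j l
  · exact eq_neg_of_add_eq_zero_right (hd.add_eq_zero_of_adj_of_adj hij.symm hil hjl)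
  rw [hd.eq_zero_of_adj_of_not_adj hjk hik, hd.eq_zero_of_adj_of_not_adj hil hjl, neg_zero]

theorem eq_zero_of_neighborFinset_ne (hd : G.IsEvolutionDerivation d)
    (hG : ∀ v, ∃ w, G.Adj v w) (h : G.neighborFinset i ≠ G.neighborFinset j) : d i j = 0 := by
  obtain ⟨k, hk⟩ : ∃ k, ¬(G.Adj i k ↔ G.Adj j k) := by
    by_contra! hc
    exact h (by ext k; simpa using hc k)
  by_cases hjk : G.Adj j k
  · exact hd.eq_zero_of_adj_of_not_adj hjk (by tauto)
  have hij : i ≠ j := by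
    rintro rfl
    exact h rfl
  rw [hd.eq_neg_of_ne hG hij, hd.eq_zero_of_adj_of_not_adj (by tauto) hjk, neg_zero]

variable [DecidableEq V]

theorem sum_twinClass_eq_two_mul (hd : G.IsEvolutionDerivation d) (hG : ∀ v, ∃ w, G.Adj v w)
    (hij : G.Adj i j) : ∑ k ∈ G.twinClass j, d k j = 2 * d i i := by
  have hsq := hd.square i j
  rw [if_pos hij, mul_one] at hsq
  rw [← hsq, ← sum_subset (subset_univ (G.twinClass j)) fun k _ hk => ?_]
  · refine sum_congr rfl fun k hk => ?_
    rw [if_pos (G.adj_of_mem_twinClass hk hij), one_mul]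
  · rw [hd.eq_zero_of_neighborFinset_ne hG (by simpa using hk), mul_zero]

end Ring

section Domain

variable [Ring K] [NoZeroDivisors K] [CharZero K] [DecidableEq V]

theorem diag_eq_of_mem_twinClass (hd : G.IsEvolutionDerivation d) (hG : ∀ v, ∃ w, G.Adj v w)
    (hk : k ∈ G.twinClass j) : d k k = d j j := by
  obtain ⟨w, hjw⟩ := hG j
  have hkw : G.Adj k w := (G.adj_of_mem_twinClass hk hjw.symm).symm
  exact mul_left_cancel₀ two_ne_zero
    ((hd.sum_twinClass_eq_two_mul hG hkw).symm.trans (hd.sum_twinClass_eq_two_mul hG hjw))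

theorem diag_eq_two_mul_of_adj (hd : G.IsEvolutionDerivation d) (hG : ∀ v, ∃ w, G.Adj v w)
    (hij : G.Adj i j) : d j j = 2 * d i i := by
  have hcol : ∀ a ∈ G.twinClass j, ∑ b ∈ G.twinClass j, d b a = 2 * d i i := fun a ha => by
    rw [← G.twinClass_eq_of_mem ha]
    exact hd.sum_twinClass_eq_two_mul hG (G.adj_of_mem_twinClass ha hij)
  have htrace := sum_sum_eq_sum_diag_of_antisymm (G.twinClass j) (fun a b => d b a)
    fun a b hab => hd.eq_neg_of_ne hG hab.symm
  rw [sum_congr rfl hcol, sum_congr rfl fun a ha => hd.diag_eq_of_mem_twinClass hG ha, sum_const,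
    sum_const] at htrace
  exact (smul_right_injective K (card_ne_zero_of_mem (G.self_mem_twinClass j)) htrace).symm

theorem diag_eq_zero (hd : G.IsEvolutionDerivation d) (hG : ∀ v, ∃ w, G.Adj v w) (i : V) :
    d i i = 0 := by
  obtain ⟨w, hiw⟩ := hG i
  have hwi := hd.diag_eq_two_mul_of_adj hG hiw.symm
  rw [hd.diag_eq_two_mul_of_adj hG hiw, ← mul_assoc] at hwi
  have h3 : (3 : K) * d i i = 0 := by
    calc (3 : K) * d i i = 2 * 2 * d i i - d i i := by noncomm_ring
      _ = 0 := by rw [← hwi, sub_self]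
  exact (mul_eq_zero.1 h3).resolve_left (by norm_num)

theorem eq_neg (hd : G.IsEvolutionDerivation d) (hG : ∀ v, ∃ w, G.Adj v w) (i j : V) :
    d i j = -d j i := by
  obtain rfl | hij := eq_or_ne i j
  · rw [hd.diag_eq_zero hG, neg_zero]
  · exact hd.eq_neg_of_ne hG hij

theorem sum_twinClass_eq_zero (hd : G.IsEvolutionDerivation d) (hG : ∀ v, ∃ w, G.Adj v w)
    (i : V) : ∑ k ∈ G.twinClass i, d k i = 0 := by
  obtain ⟨w, hiw⟩ := hG i
  rw [hd.sum_twinClass_eq_two_mul hG hiw.symm, hd.diag_eq_zero hG, mul_zero]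

end Domain

end IsEvolutionDerivation

end SimpleGraph

theorem der_structure {V : Type*} [Fintype V] [DecidableEq V]
    (G : SimpleGraph V) [DecidableRel G.Adj]
{K : Type*} [Field K] [CharZero K]
    (hconn : G.Connected) (hcard : 3 ≤ Fintype.card V)
    (d : V → V → K)
    (h1 : ∀ i j k : V, i ≠ j →
      (if G.Adj j k then (1:K) else 0) * d i j +
      (if G.Adj i k then (1:K) else 0) * d j i = 0)
    (h2 : ∀ i j : V, ∑ k, (if G.Adj i k then (1:K) else 0) * d k j =
      2 * (if G.Adj i j then (1:K) else 0) * d i i)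
    : (∀ i : V, d i i = 0) ∧
      (∀ i j : V, d i j = - d j i) ∧
      (∀ i j : V, G.neighborFinset i ≠ G.neighborFinset j → d i j = 0) ∧
      (∀ i : V, ∑ k ∈ Finset.univ.filter (fun j =>
          G.neighborFinset j = G.neighborFinset i), d k i = 0) := by
  have hd : G.IsEvolutionDerivation d := ⟨h1, h2⟩
  have : Nontrivial V := Fintype.one_lt_card_iff_nontrivial.1 (by omega)
  have hG : ∀ v, ∃ w, G.Adj v w := hconn.preconnected.exists_adj_of_nontrivial
  exact ⟨hd.diag_eq_zero hG, hd.eq_neg hG, fun _ _ => hd.eq_zero_of_neighborFinset_ne hG,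
    hd.sum_twinClass_eq_zero hG⟩
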